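/- arXiv:1701.04092 — 3 statements merged into one kernel-verified Lean document; each statement's English description precedes it below -/
import Mathlib

section
/- Let q be an odd prime power, P ∈ 𝔽_q[T] monic irreducible, ν ≥ 1, and f ∈ 𝔽_q[T] with f ≢ 0 mod P^ν. Write f = P^α·g with α = v_P(f) (so 0 ≤ α < ν and P ∤ g). Then: (1) if χ_q(P) = −1, the class of f lies in 𝒜_q(P^ν) if and only if α is even; (2) if χ_q(P) = 0 (i.e. P = T), the class of f lies in 𝒜_q(P^ν) if and only if χ_q(g) = 1, i.e. g(0) is a nonzero square in 𝔽_q; (3) if χ_q(P) = 1, the class of f always lies in 𝒜_q(P^ν). -/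
/-!
Let `K = 𝔽_q[T]/(P)` and `t` the image of `T`. For `P ≠ T`, `N_{K/𝔽_q}(-t) = P(0)`, and in a finite
field of odd characteristic an element is a square exactly when its norm is; so `χ_q(P)` decides
whether `-t` is a square in `K`.

If `χ_q(P) = 1`, then `T z² ≡ -1` modulo `P` for some `z`, Hensel lifts this to `P^ν`, and
`x = ((1 + x)/2)² + T (z (1 - x)/2)²` represents every class. In general the classes
`A² + T B²` form a multiplicative monoid (the norm form of `𝔽_q[T][√-T]`) containing all squares
and `T`. If `χ_q(P) = -1`, the form `a² + t b²` is anisotropic over `K`, so a `P`-adic descent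
shows that `A² + T B² ≡ P^α g` forces `α` even; conversely every unit is represented modulo `P`
(two quadratics over a finite field) and hence, by Hensel, modulo `P^ν`. If `P = T`, reducing the
descent modulo `T` shows `g(0)` is a square, and conversely Hensel makes `g` itself a square
modulo `T^ν`.
-/

open Polynomial Filter

open scoped Classical

noncomputable section

variable (F : Type*) [Field F] [Fintype F]

/-- `f` is a sum of two squares in the function-field sense: `f = A² + T·B²`. -/
def IsSOS (f : F[X]) : Prop := ∃ A B : F[X], f = A ^ 2 + X * B ^ 2

/-- The indicator function `b_q` of sums of two squares. -/
def bq (f : F[X]) : ℝ := if IsSOS F f then 1 else 0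

/-- `r_q(f)`: the number of representations `f = A² + T·B²`, counted up to sign. -/
def rq (f : F[X]) : ℝ :=
  (Nat.card {p : F[X] × F[X] // f = p.1 ^ 2 + X * p.2 ^ 2} : ℝ) / 2

/-- Indicator of monic irreducible (prime) polynomials. -/
def primeInd (f : F[X]) : ℝ := if f.Monic ∧ Irreducible f then 1 else 0

/-- The `r`-divisor function: number of ordered factorizations into `r` monic factors. -/
def dr (r : ℕ) (f : F[X]) : ℝ :=
  (Nat.card {g : Fin r → F[X] // (∀ i, (g i).Monic) ∧ ∏ i, g i = f} : ℝ)

/-- The quadratic character modulo `T`. -/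
def chiq (f : F[X]) : ℝ :=
  if f.eval 0 = 0 then 0 else if IsSquare (f.eval 0) then 1 else -1

/-- The norm `|P| = q^{deg P}`. -/
def absP (P : F[X]) : ℝ := (Fintype.card F : ℝ) ^ P.natDegree

/-- `𝒜_q(g) = {A² + T·B² mod g}` inside `𝔽_q[T]/(g)`. -/
def Aset (g : F[X]) : Set (F[X] ⧸ Ideal.span {g}) :=
  {x | ∃ A B : F[X], x = Ideal.Quotient.mk (Ideal.span {g}) (A ^ 2 + X * B ^ 2)}

/-- `𝒜_{q,h}(g) = {f : f + hᵢ ∈ 𝒜_q(g) for all i}`. -/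
def Ahset {k : ℕ} (h : Fin k → F[X]) (g : F[X]) : Set (F[X] ⧸ Ideal.span {g}) :=
  {x | ∀ i, x + Ideal.Quotient.mk (Ideal.span {g}) (h i) ∈ Aset F g}

/-- `Ω_{q,h}(g)`: elements of `𝒜_{q,h}(g)` with `f + hᵢ ≡ 0` for some `i`. -/
def OmegaSet {k : ℕ} (h : Fin k → F[X]) (g : F[X]) : Set (F[X] ⧸ Ideal.span {g}) :=
  {x ∈ Ahset F h g | ∃ i, x + Ideal.Quotient.mk (Ideal.span {g}) (h i) = 0}

/-- `Ω*_{q,h}(g)`: elements of `𝒜_{q,h}(g)` with `f + hᵢ ≢ 0` for all `i`. -/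
def OmegaStar {k : ℕ} (h : Fin k → F[X]) (g : F[X]) : Set (F[X] ⧸ Ideal.span {g}) :=
  {x ∈ Ahset F h g | ∀ i, x + Ideal.Quotient.mk (Ideal.span {g}) (h i) ≠ 0}

/-- `δ_{q,h}(P) = lim_ν |P|^{-ν} #𝒜_{q,h}(P^ν)`; since the sequence is monotonically
decreasing and nonnegative, the limit equals the infimum. -/
def deltaP {k : ℕ} (h : Fin k → F[X]) (P : F[X]) : ℝ :=
  ⨅ ν : ℕ, (Nat.card ↥(Ahset F h (P ^ ν)) : ℝ) / absP F P ^ ν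

/-- The singular series `𝔖_{q,h} = ∏_P δ_{q,h}(P)/δ_{q,0}(P)^k`. -/
def singSeries {k : ℕ} (h : Fin k → F[X]) : ℝ :=
  ∏' P : {P : F[X] // P.Monic ∧ Irreducible P},
    deltaP F h P.1 / deltaP F (fun _ : Fin 1 => (0 : F[X])) P.1 ^ k

/-- `𝔖_h = 2^{k − #{h₁(0),…,h_k(0)}}`. -/
def Sfrak {k : ℕ} (h : Fin k → F[X]) : ℝ :=
  2 ^ (k - Set.ncard (Set.range fun i => (h i).eval 0))

/-- `𝔇_h = 1` iff every value `a ∈ 𝔽_q` is attained by an even number of the `hᵢ(0)`. -/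
def Dfrak {k : ℕ} (h : Fin k → F[X]) : ℝ :=
  if ∀ a : F, Even (Nat.card {i : Fin k // (h i).eval 0 = a}) then 1 else 0

/-- The average of `ψ` over all monic polynomials of degree `n`
(parametrized by their lower `n` coefficients). -/
def monicAvg (n : ℕ) (ψ : F[X] → ℝ) : ℝ :=
  (∑ a : Fin n → F, ψ (X ^ n + ∑ i : Fin n, C (a i) * X ^ (i : ℕ))) /
    (Fintype.card F : ℝ) ^ n

/-- The average of `ψ` over the short interval `{f : deg(f - f₀) < m}` around `f₀`,
parametrized by the `m` free lowest coefficients. -/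
def intervalAvg (f0 : F[X]) (m : ℕ) (ψ : F[X] → ℝ) : ℝ :=
  (∑ a : Fin m → F, ψ (f0 + ∑ i : Fin m, C (a i) * X ^ (i : ℕ))) /
    (Fintype.card F : ℝ) ^ m

end
namespace FiniteField

theorem isSquare_norm_iff {K L : Type*} [Field K] [Field L] [Algebra K L] [Finite L]
    (hK : ringChar K ≠ 2) {x : L} : IsSquare (Algebra.norm K x) ↔ IsSquare x := by
  have := Finite.of_injective _ (algebraMap K L).injective
  have := Fintype.ofFinite K
  have := Fintype.ofFinite L
  rcases eq_or_ne x 0 with rfl | hx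
  · simp
  have hL : ringChar L ≠ 2 := Algebra.ringChar_eq K L ▸ hK
  have hnx : Algebra.norm K x ≠ 0 := Algebra.norm_ne_zero_iff.2 hx
  -- the norm is `x ↦ x ^ e` with `e = (|L| - 1) / (|K| - 1)`; compare with Euler's criterion
  have hexp : (Nat.card L - 1) / (Nat.card K - 1) * (Fintype.card K / 2) =
      Fintype.card L / 2 := by
    obtain ⟨k, hk⟩ : Odd (Fintype.card K) := Nat.odd_iff.2 (odd_card_of_char_ne_two hK)
    obtain ⟨e, he⟩ : Fintype.card K - 1 ∣ Fintype.card L - 1 := by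
      rw [Module.card_eq_pow_finrank (K := K) (V := L)]
      exact Nat.sub_one_dvd_pow_sub_one _ _
    have hk0 : 0 < 2 * k := by have := Fintype.one_lt_card (α := K); omega
    have hL1 : 1 ≤ Fintype.card L := Fintype.card_pos
    simp only [Nat.card_eq_fintype_card, he, hk, Nat.add_sub_cancel,
      Nat.mul_div_cancel_left _ hk0]
    rw [hk, Nat.add_sub_cancel, mul_assoc] at he
    rw [show (2 * k + 1) / 2 = k by omega, mul_comm]
    omega
  rw [isSquare_iff hK hnx, isSquare_iff hL hx, ← (algebraMap K L).injective.eq_iff, map_pow,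
    algebraMap_norm_eq_pow, map_one, ← pow_mul, hexp]

end FiniteField

theorem exists_pow_dvd_sub_mul_sq_of_isCoprime {R : Type*} [CommRing R] {p c u s₀ : R}
    (hcop : IsCoprime p (2 * c * s₀)) (h : p ∣ u - c * s₀ ^ 2) (n : ℕ) :
    ∃ s, p ^ n ∣ u - c * s ^ 2 := by
  suffices key : ∀ n, ∃ s, IsCoprime p (2 * c * s) ∧ p ^ (n + 1) ∣ u - c * s ^ 2 by
    obtain ⟨s, -, hs⟩ := key n
    exact ⟨s, (pow_dvd_pow p n.le_succ).trans hs⟩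
  intro n
  induction n with
  | zero => exact ⟨s₀, hcop, by simpa using h⟩
  | succ n ih =>
    obtain ⟨s, hs, w, hw⟩ := ih
    have ⟨a, b, hab⟩ := hs
    -- Newton step: `b` inverts the derivative `2 * c * s` modulo `p`
    refine ⟨s + p ^ (n + 1) * (b * w), ?_, a * w - c * p ^ n * b ^ 2 * w ^ 2, ?_⟩
    · convert hs.add_mul_left_right (2 * c * p ^ n * b * w) using 1
      ring
    · linear_combination hw - p ^ (n + 1) * w * hab

namespace Polynomial

variable {F : Type*} [Field F]

theorem exists_pow_dvd_sub_mul_sq (h2 : (2 : F) ≠ 0) {P c u s₀ : F[X]} (hPi : Irreducible P)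
    (hc : ¬P ∣ c) (hu : ¬P ∣ u) (h : P ∣ u - c * s₀ ^ 2) (n : ℕ) :
    ∃ s, P ^ n ∣ u - c * s ^ 2 := by
  have hs₀ : ¬P ∣ s₀ := fun hs => hu <| by
    simpa using h.add ((hs.pow two_ne_zero).mul_left c)
  have h2u : IsUnit (2 : F[X]) := by
    rw [← map_ofNat C 2]
    exact isUnit_C.2 h2.isUnit
  refine exists_pow_dvd_sub_mul_sq_of_isCoprime ?_ h n
  rw [mul_assoc, isCoprime_mul_unit_left_right h2u]
  exact (hPi.coprime_iff_not_dvd.2 hc).mul_right (hPi.coprime_iff_not_dvd.2 hs₀)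

theorem eval_zero_eq_zero_iff_eq_X {P : F[X]} (hPm : P.Monic) (hPi : Irreducible P) :
    P.eval 0 = 0 ↔ P = X := by
  refine ⟨fun h => ?_, fun h => by simp [h]⟩
  have hXP : X ∣ P := X_dvd_iff.2 (by rwa [coeff_zero_eq_eval_zero])
  exact (eq_of_monic_of_associated monic_X hPm (irreducible_X.associated_of_dvd hPi hXP)).symm

end Polynomial

namespace AdjoinRoot

variable {F : Type*} [Field F] {P : F[X]}

theorem norm_neg_root (hPm : P.Monic) : Algebra.norm F (-root P) = P.eval 0 := by
  let pb := powerBasis hPm.ne_zero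
  have hgen : pb.gen = root P := rfl
  have hneg : (-1 : AdjoinRoot P) = algebraMap F _ (-1) := by simp
  rw [neg_eq_neg_one_mul, hneg, map_mul, Algebra.norm_algebraMap, ← hgen,
    Algebra.PowerBasis.norm_gen_eq_coeff_zero_minpoly, minpoly_powerBasis_gen_of_monic hPm,
    pb.finrank, ← mul_assoc, ← mul_pow, neg_one_mul, neg_neg, one_pow, one_mul,
    coeff_zero_eq_eval_zero]

variable [Finite F] [Fact (Irreducible P)]

theorem finite_of_monic (hPm : P.Monic) : Finite (AdjoinRoot P) :=
  have := hPm.finite_adjoinRoot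
  Module.finite_of_finite F

theorem isSquare_neg_root_iff (hF : ringChar F ≠ 2) (hPm : P.Monic) :
    IsSquare (-root P) ↔ IsSquare (P.eval 0) := by
  have := finite_of_monic hPm
  rw [← FiniteField.isSquare_norm_iff hF, norm_neg_root hPm]

theorem root_ne_zero (hPm : P.Monic) (hP0 : P.eval 0 ≠ 0) : root P ≠ 0 := by
  have := hPm.finite_adjoinRoot
  intro h
  rw [← norm_neg_root hPm, h, neg_zero, Algebra.norm_zero] at hP0
  exact hP0 rfl

end AdjoinRoot

namespace Polynomial

open AdjoinRoot

variable {F : Type*} [Field F] [Finite F] {P : F[X]}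

theorem not_dvd_X (hPm : P.Monic) (hPi : Irreducible P) (hP0 : P.eval 0 ≠ 0) : ¬P ∣ X := by
  have := Fact.mk hPi
  rw [← mk_eq_zero, mk_X]
  exact root_ne_zero hPm hP0

theorem exists_dvd_sub_sq_add_X_mul_sq (hF : ringChar F ≠ 2) (hPm : P.Monic)
    (hPi : Irreducible P) (hP0 : P.eval 0 ≠ 0) (g : F[X]) :
    ∃ a b : F[X], P ∣ g - (a ^ 2 + X * b ^ 2) := by
  have := Fact.mk hPi
  have := finite_of_monic hPm
  have := Fintype.ofFinite (AdjoinRoot P)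
  have hK : ringChar (AdjoinRoot P) ≠ 2 := Algebra.ringChar_eq F (AdjoinRoot P) ▸ hF
  obtain ⟨a, b, hab⟩ := FiniteField.exists_root_sum_quadratic
    (degree_X_pow_sub_C two_pos (mk P g)) (degree_C_mul_X_pow 2 (root_ne_zero hPm hP0))
    (FiniteField.odd_card_of_char_ne_two hK)
  obtain ⟨a, rfl⟩ := mk_surjective a
  obtain ⟨b, rfl⟩ := mk_surjective b
  refine ⟨a, b, ?_⟩
  rw [← mk_eq_zero, map_sub, map_add, map_mul, map_pow, map_pow, mk_X]
  simp only [eval_sub, eval_mul, eval_pow, eval_X, eval_C] at hab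
  linear_combination -hab

theorem dvd_and_dvd_of_dvd_sq_add_X_mul_sq (hF : ringChar F ≠ 2) (hPm : P.Monic)
    (hPi : Irreducible P) (hP : ¬IsSquare (P.eval 0)) {a b : F[X]}
    (h : P ∣ a ^ 2 + X * b ^ 2) : P ∣ a ∧ P ∣ b := by
  have := Fact.mk hPi
  rw [← mk_eq_zero, map_add, map_mul, map_pow, map_pow, mk_X] at h
  have hb : mk P b = 0 := by
    by_contra hb
    refine hP ((isSquare_neg_root_iff hF hPm).1 ⟨mk P a / mk P b, ?_⟩)
    field_simp
    linear_combination -h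
  rw [hb, zero_pow two_ne_zero, mul_zero, add_zero, pow_eq_zero_iff two_ne_zero] at h
  exact ⟨mk_eq_zero.1 h, mk_eq_zero.1 hb⟩

theorem exists_pow_dvd_X_mul_sq_add_one (hF : ringChar F ≠ 2) (hPm : P.Monic)
    (hPi : Irreducible P) (hP0 : P.eval 0 ≠ 0) (hP : IsSquare (P.eval 0)) (n : ℕ) :
    ∃ z : F[X], P ^ n ∣ X * z ^ 2 + 1 := by
  have := Fact.mk hPi
  obtain ⟨y, hy⟩ := (isSquare_neg_root_iff hF hPm).2 hP
  have hroot := root_ne_zero hPm hP0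
  obtain ⟨z₀, hz₀⟩ := mk_surjective (y / root P)
  have hbase : P ∣ -1 - X * z₀ ^ 2 := by
    have hw : root P * (y / root P) ^ 2 = -1 := by
      field_simp
      linear_combination -hy
    rw [← mk_eq_zero, map_sub, map_mul, map_pow, mk_X, hz₀, hw, map_neg, map_one, sub_neg_eq_add,
      neg_add_cancel]
  obtain ⟨z, hz⟩ := exists_pow_dvd_sub_mul_sq (Ring.two_ne_zero hF) hPi (not_dvd_X hPm hPi hP0)
    (fun h => hPi.not_isUnit (isUnit_of_dvd_unit h isUnit_one.neg)) hbase n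
  exact ⟨z, by simpa [sub_eq_add_neg, add_comm] using hz.neg_right⟩

end Polynomial

section Aset

variable {F : Type*} [Field F]

theorem mk_mem_Aset_iff {m f : F[X]} :
    Ideal.Quotient.mk (Ideal.span {m}) f ∈ Aset F m ↔
      ∃ A B : F[X], m ∣ f - (A ^ 2 + X * B ^ 2) := by
  simp only [Aset, Set.mem_ofPred_eq, Ideal.Quotient.eq, Ideal.mem_span_singleton]

/-- Closure under multiplication is `(A² + XB²)(C² + XD²) = (AC - XBD)² + X(AD + BC)²`. -/
def Aset.submonoid (m : F[X]) : Submonoid (F[X] ⧸ Ideal.span {m}) where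
  carrier := Aset F m
  one_mem' := ⟨1, 0, by simp⟩
  mul_mem' := by
    rintro _ _ ⟨A, B, rfl⟩ ⟨C, D, rfl⟩
    exact ⟨A * C - X * B * D, A * D + B * C, by rw [← map_mul]; ring_nf⟩

theorem mk_sq_mem_Aset (m A : F[X]) : Ideal.Quotient.mk (Ideal.span {m}) (A ^ 2) ∈ Aset F m :=
  ⟨A, 0, by simp⟩

theorem mk_X_mem_Aset (m : F[X]) : Ideal.Quotient.mk (Ideal.span {m}) X ∈ Aset F m :=
  ⟨0, 1, by simp⟩

theorem mk_mem_Aset_of_dvd_X_mul_sq_add_one (h2 : (2 : F) ≠ 0) {m z : F[X]}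
    (hz : m ∣ X * z ^ 2 + 1) (f : F[X]) : Ideal.Quotient.mk (Ideal.span {m}) f ∈ Aset F m := by
  -- `f = ((1 + f) / 2)² - ((1 - f) / 2)²`, and `-1 ≡ X z²` modulo `m`
  have h2' : C (2⁻¹ : F) * 2 = 1 := by rw [← map_ofNat C 2, ← C_mul, inv_mul_cancel₀ h2, C_1]
  refine mk_mem_Aset_iff.2 ⟨C 2⁻¹ * (1 + f), C 2⁻¹ * (1 - f) * z, ?_⟩
  have hid : f - ((C 2⁻¹ * (1 + f)) ^ 2 + X * (C 2⁻¹ * (1 - f) * z) ^ 2) =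
      -(C 2⁻¹ * (1 - f)) ^ 2 * (X * z ^ 2 + 1) := by
    linear_combination -(f * (C 2⁻¹ * 2 + 1)) * h2'
  rw [hid]
  exact hz.mul_left _

theorem mk_mem_Aset_pow_of_not_dvd [Finite F] (hF : ringChar F ≠ 2) {P g : F[X]} (hPm : P.Monic)
    (hPi : Irreducible P) (hP0 : P.eval 0 ≠ 0) (hg : ¬P ∣ g) (ν : ℕ) :
    Ideal.Quotient.mk (Ideal.span {P ^ ν}) g ∈ Aset F (P ^ ν) := by
  have h2 := Ring.two_ne_zero hF
  obtain ⟨a, b, hab⟩ := exists_dvd_sub_sq_add_X_mul_sq hF hPm hPi hP0 g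
  rw [mk_mem_Aset_iff]
  by_cases ha : P ∣ a
  · -- lift `b` as a square root of `(g - a²) / X`
    have hu : ¬P ∣ g - a ^ 2 := fun h => hg (by simpa using h.add (ha.pow two_ne_zero))
    obtain ⟨s, hs⟩ := exists_pow_dvd_sub_mul_sq h2 hPi (not_dvd_X hPm hPi hP0) (s₀ := b) hu
      (by convert hab using 1; ring) ν
    exact ⟨a, s, by convert hs using 1; ring⟩
  · -- lift `a` as a square root of `g - X b²`
    have hu : ¬P ∣ g - X * b ^ 2 := fun h =>
      ha (hPi.prime.dvd_of_dvd_pow (n := 2) (by simpa using h.sub hab))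
    obtain ⟨s, hs⟩ := exists_pow_dvd_sub_mul_sq h2 hPi (c := 1) (s₀ := a) hPi.not_dvd_one hu
      (by convert hab using 1; ring) ν
    exact ⟨s, b, by convert hs using 1; ring⟩

theorem mk_mem_Aset_X_pow_of_isSquare (hF : ringChar F ≠ 2) {g : F[X]} (hg0 : g.eval 0 ≠ 0)
    (hg : IsSquare (g.eval 0)) (ν : ℕ) :
    Ideal.Quotient.mk (Ideal.span {X ^ ν}) g ∈ Aset F (X ^ ν) := by
  obtain ⟨c, hc⟩ := hg
  obtain ⟨s, hs⟩ := exists_pow_dvd_sub_mul_sq (Ring.two_ne_zero hF) irreducible_X (c := 1)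
    (s₀ := C c) (by simp [X_dvd_iff]) (by rwa [X_dvd_iff, coeff_zero_eq_eval_zero])
    (by simp [X_dvd_iff, coeff_zero_eq_eval_zero, hc, sq]) ν
  exact mk_mem_Aset_iff.2 ⟨s, 0, by simpa using hs⟩

theorem isSquare_eval_zero_of_X_pow_dvd {α ν : ℕ} (hα : α < ν) {g A B : F[X]}
    (h : X ^ ν ∣ X ^ α * g - (A ^ 2 + X * B ^ 2)) : IsSquare (g.eval 0) := by
  induction α generalizing ν A B with
  | zero =>
    have h0 := (dvd_pow_self X hα.ne').trans h
    rw [X_dvd_iff, coeff_zero_eq_eval_zero] at h0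
    simp only [pow_zero, one_mul, eval_sub, eval_add, eval_mul, eval_pow, eval_X, zero_mul,
      add_zero] at h0
    exact ⟨A.eval 0, by linear_combination h0⟩
  | succ k ih =>
    obtain ⟨n, rfl⟩ : ∃ n, ν = n + 1 := ⟨ν - 1, by omega⟩
    have hA : X ∣ A := by
      have h0 := (dvd_pow_self X (Nat.succ_ne_zero n)).trans h
      rw [X_dvd_iff, coeff_zero_eq_eval_zero] at h0
      simpa [X_dvd_iff, coeff_zero_eq_eval_zero] using h0
    obtain ⟨A₁, rfl⟩ := hA
    -- `X^(k+1) g - ((X A₁)² + X B²) = X (X^k g - (B² + X A₁²))`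
    refine ih (ν := n) (by omega) (A := B) (B := A₁) ((mul_dvd_mul_iff_left X_ne_zero).1 ?_)
    convert h using 1 <;> ring

theorem even_of_pow_dvd {P g : F[X]} (hPi : Irreducible P)
    (haniso : ∀ a b : F[X], P ∣ a ^ 2 + X * b ^ 2 → P ∣ a ∧ P ∣ b) (hg : ¬P ∣ g) :
    ∀ {α ν : ℕ} {A B : F[X]}, α < ν → P ^ ν ∣ P ^ α * g - (A ^ 2 + X * B ^ 2) → Even α
  | 0, _, _, _, _, _ => .zero
  | α + 1, ν, A, B, hα, h => by
    obtain ⟨n, rfl⟩ : ∃ n, ν = n + 2 := ⟨ν - 2, by omega⟩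
    have hP : P ∣ A ^ 2 + X * B ^ 2 := by
      have := (dvd_pow_self P (Nat.succ_ne_zero _)).trans h
      simpa using (dvd_mul_of_dvd_left (dvd_pow_self P α.succ_ne_zero) g).sub this
    obtain ⟨⟨A₁, rfl⟩, ⟨B₁, rfl⟩⟩ := haniso A B hP
    have hsum : (P * A₁) ^ 2 + X * (P * B₁) ^ 2 = P ^ 2 * (A₁ ^ 2 + X * B₁ ^ 2) := by ring
    rw [hsum] at h
    rcases α with _ | α
    · refine absurd ((mul_dvd_mul_iff_left hPi.ne_zero).1 ?_) hg
      have h2 := (pow_dvd_pow P (by omega : 2 ≤ n + 2)).trans h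
      have h3 := h2.add (dvd_mul_right (P ^ 2) (A₁ ^ 2 + X * B₁ ^ 2))
      rwa [sub_add_cancel, pow_one, sq] at h3
    · have h' : P ^ 2 * P ^ n ∣ P ^ 2 * (P ^ α * g - (A₁ ^ 2 + X * B₁ ^ 2)) := by
        convert h using 1 <;> ring
      have := even_of_pow_dvd hPi haniso hg (by omega)
        ((mul_dvd_mul_iff_left (pow_ne_zero 2 hPi.ne_zero)).1 h')
      simpa [Nat.even_add_one] using this

end Aset

section chiq

variable {F : Type*} [Field F] [Fintype F] {f : F[X]}

theorem chiq_eq_neg_one_iff : chiq F f = -1 ↔ f.eval 0 ≠ 0 ∧ ¬IsSquare (f.eval 0) := by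
  unfold chiq
  split_ifs <;> norm_num [*]

theorem chiq_eq_zero_iff : chiq F f = 0 ↔ f.eval 0 = 0 := by
  unfold chiq
  split_ifs <;> norm_num [*]

theorem chiq_eq_one_iff : chiq F f = 1 ↔ f.eval 0 ≠ 0 ∧ IsSquare (f.eval 0) := by
  unfold chiq
  split_ifs <;> norm_num [*]

end chiq

theorem mem_Aset_characterization_general (F : Type) [Field F] [Fintype F]
    (hF : Odd (Fintype.card F)) (P : F[X]) (hPm : P.Monic) (hPi : Irreducible P)
    (ν : ℕ) (f g : F[X]) (α : ℕ)
    (hfg : f = P ^ α * g) (hg : ¬ P ∣ g) (hf : ¬ P ^ ν ∣ f) :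
    (chiq F P = -1 →
      (Ideal.Quotient.mk (Ideal.span {P ^ ν}) f ∈ Aset F (P ^ ν) ↔ Even α)) ∧
    (chiq F P = 0 →
      (Ideal.Quotient.mk (Ideal.span {P ^ ν}) f ∈ Aset F (P ^ ν) ↔ chiq F g = 1)) ∧
    (chiq F P = 1 →
      Ideal.Quotient.mk (Ideal.span {P ^ ν}) f ∈ Aset F (P ^ ν)) := by
  have hF2 : ringChar F ≠ 2 := by
    rwa [Ne, FiniteField.even_card_iff_char_two, ← Nat.even_iff, Nat.not_even_iff_odd]
  have hαν : α < ν := lt_of_not_ge fun h => hf (hfg ▸ dvd_mul_of_dvd_left (pow_dvd_pow P h) g)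
  subst hfg
  refine ⟨fun hP => ?_, fun hP => ?_, fun hP => ?_⟩
  · obtain ⟨hP0, hPsq⟩ := chiq_eq_neg_one_iff.1 hP
    refine ⟨fun h => ?_, fun ⟨r, hr⟩ => ?_⟩
    · obtain ⟨A, B, hAB⟩ := mk_mem_Aset_iff.1 h
      exact even_of_pow_dvd hPi (fun _ _ => dvd_and_dvd_of_dvd_sq_add_X_mul_sq hF2 hPm hPi hPsq)
        hg hαν hAB
    · rw [hr, ← two_mul, pow_mul', map_mul]
      exact (Aset.submonoid _).mul_mem (mk_sq_mem_Aset _ _)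
        (mk_mem_Aset_pow_of_not_dvd hF2 hPm hPi hP0 hg ν)
  · obtain rfl := (eval_zero_eq_zero_iff_eq_X hPm hPi).1 (chiq_eq_zero_iff.1 hP)
    have hg0 : g.eval 0 ≠ 0 := by rwa [X_dvd_iff, coeff_zero_eq_eval_zero] at hg
    rw [chiq_eq_one_iff, and_iff_right hg0]
    refine ⟨fun h => ?_, fun hsq => ?_⟩
    · obtain ⟨A, B, hAB⟩ := mk_mem_Aset_iff.1 h
      exact isSquare_eval_zero_of_X_pow_dvd hαν hAB
    · rw [map_mul, map_pow]
      exact (Aset.submonoid _).mul_mem ((Aset.submonoid _).pow_mem (mk_X_mem_Aset _) α)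
        (mk_mem_Aset_X_pow_of_isSquare hF2 hg0 hsq ν)
  · obtain ⟨hP0, hPsq⟩ := chiq_eq_one_iff.1 hP
    obtain ⟨z, hz⟩ := exists_pow_dvd_X_mul_sq_add_one hF2 hPm hPi hP0 hPsq ν
    exact mk_mem_Aset_of_dvd_X_mul_sq_add_one (Ring.two_ne_zero hF2) hz _

/-- **Lemma (characterization of `𝒜_q(P^ν)`).**
Let `P` be monic irreducible, `ν ≥ 1`, and `f = P^α·g` with `P ∤ g` and `P^ν ∤ f`
(so `α = v_P(f) < ν`). Then: if `χ_q(P) = −1`, `f mod P^ν ∈ 𝒜_q(P^ν)` iff `α` is even;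
if `χ_q(P) = 0`, iff `g(0)` is a nonzero square, i.e. `χ_q(g) = 1`;
if `χ_q(P) = 1`, always. -/
theorem mem_Aset_characterization (F : Type) [Field F] [Fintype F]
    (hF : Odd (Fintype.card F)) (P : F[X]) (hPm : P.Monic) (hPi : Irreducible P)
    (ν : ℕ) (hν : 1 ≤ ν) (f g : F[X]) (α : ℕ)
    (hfg : f = P ^ α * g) (hg : ¬ P ∣ g) (hf : ¬ P ^ ν ∣ f) :
    (chiq F P = -1 →
      (Ideal.Quotient.mk (Ideal.span {P ^ ν}) f ∈ Aset F (P ^ ν) ↔ Even α)) ∧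
    (chiq F P = 0 →
      (Ideal.Quotient.mk (Ideal.span {P ^ ν}) f ∈ Aset F (P ^ ν) ↔ chiq F g = 1)) ∧
    (chiq F P = 1 →
      Ideal.Quotient.mk (Ideal.span {P ^ ν}) f ∈ Aset F (P ^ ν)) :=
  mem_Aset_characterization_general F hF P hPm hPi ν f g α hfg hg hf
end

section
/- Let q be an odd prime power, P ∈ 𝔽_q[T] monic irreducible, and h = (h₁,…,h_k) a k-tuple of pairwise distinct polynomials in 𝔽_q[T]. Then δ_{q,h}(P) = 0 if and only if 𝒜_{q,h}(P^ν) = ∅ for some ν ≥ 1. -/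
open Polynomial Filter

open scoped Classical

/-!
If some `𝒜_{q,h}(P^ν)` is empty, so are all later ones and the normalized counts vanish
eventually. Conversely, a representation `f ≡ A² + T B² (mod P^ν)` in which `A` or `T B` has
`P`-adic valuation `a` with `2a < ν` lifts by Newton's method (`q` is odd) to a representation
of any `f' ≡ f (mod P^ν)` modulo `P^(ν+1)`. Since the `hᵢ` are distinct, at most one `f + hᵢ` is
divisible by a high power of `P`; for all others a representation modulo a large power of `P`
is automatically of this kind, and the exceptional one is repaired by shifting `f` by an even
power of `P`. Once all `f₀ + hᵢ` are liftable modulo `P^ν₀`, the whole residue class of `f₀`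
lies in `𝒜_{q,h}(P^ν)`, so `#𝒜_{q,h}(P^ν) ≥ |P|^(ν-ν₀)` and the normalized counts stay above
`|P|^(-ν₀)`.
-/

theorem Prime.pow_dvd_of_pow_succ_dvd_mul_of_squarefree {R : Type*} [CommMonoidWithZero R]
    [IsCancelMulZero R] {p x z : R} (hp : Prime p) (hx : Squarefree x) (n : ℕ)
    (h : p ^ (n + 1) ∣ x * z) : p ^ n ∣ z := by
  by_cases hpx : p ∣ x
  · obtain ⟨y, rfl⟩ := hpx
    have hpy : ¬p ∣ y := fun ⟨t, ht⟩ => hp.not_isUnit (hx p ⟨t, by rw [ht, mul_assoc]⟩)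
    rw [pow_succ', mul_assoc, mul_dvd_mul_iff_left hp.ne_zero] at h
    exact hp.pow_dvd_of_dvd_mul_left n hpy h
  · exact (pow_dvd_pow p n.le_succ).trans (hp.pow_dvd_of_dvd_mul_left _ hpx h)

theorem exists_pow_not_dvd_sub {R ι : Type*} [CommRing R] [IsDomain R] [WfDvdMonoid R]
    [Finite ι] {p : R} (hp : ¬IsUnit p) {h : ι → R} (hinj : Function.Injective h) :
    ∃ V : ℕ, ∀ i j, i ≠ j → ¬p ^ V ∣ h i - h j := by
  have hfin (ij : ι × ι) : ∃ n : ℕ, ij.1 ≠ ij.2 → ¬p ^ n ∣ h ij.1 - h ij.2 := by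
    by_cases hij : ij.1 = ij.2
    · exact ⟨0, fun hne => (hne hij).elim⟩
    · obtain ⟨n, hn⟩ := FiniteMultiplicity.of_not_isUnit hp (sub_ne_zero.2 (hinj.ne hij))
      exact ⟨n + 1, fun _ => hn⟩
  choose n hn using hfin
  obtain ⟨V, hV⟩ := Finite.exists_le n
  exact ⟨V, fun i j hij hd => hn (i, j) hij ((pow_dvd_pow p (hV _)).trans hd)⟩

section SmoothRep

variable {F : Type*} [Field F] {P f g : F[X]} {ν μ : ℕ}

/-- `A` or `X B` has exact `P`-adic valuation `a`, with `2a < ν`. -/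
def HasSmoothRep (P : F[X]) (ν : ℕ) (f : F[X]) : Prop :=
  ∃ A B u : F[X], ∃ a : ℕ, P ^ ν ∣ f - (A ^ 2 + X * B ^ 2) ∧ 2 * a < ν ∧
    (A = P ^ a * u ∨ X * B = P ^ a * u) ∧ ¬P ∣ u

theorem HasSmoothRep.lift (h2 : (2 : F) ≠ 0) (hP : Prime P) (hf : HasSmoothRep P ν f)
    (hfg : P ^ ν ∣ g - f) : HasSmoothRep P (ν + 1) g := by
  obtain ⟨A, B, u, a, ⟨w, hw⟩, ha, hAB, hu⟩ := hf
  obtain ⟨r, hr⟩ := hfg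
  obtain ⟨c, rfl⟩ : ∃ c, ν = 2 * a + 1 + c := ⟨ν - (2 * a + 1), by omega⟩
  have h2unit : IsUnit (2 : F[X]) := by
    rw [← map_ofNat C 2]; exact (IsUnit.mk0 _ h2).map C
  have h2u : ¬P ∣ 2 * u := fun hdvd =>
    (hP.dvd_or_dvd hdvd).elim (fun h => hP.not_isUnit (isUnit_of_dvd_unit h h2unit)) hu
  -- Newton's step: choose `s` with `2 u s ≡ w + r (mod P)`.
  obtain ⟨α, β, hαβ⟩ := hP.coprime_iff_not_dvd.2 h2u
  set s := β * (w + r)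
  have hs : w + r - 2 * u * s = P * (α * (w + r)) := by linear_combination -(w + r) * hαβ
  have hu' (z : F[X]) : ¬P ∣ u + P ^ (c + 1) * z := fun hd =>
    hu ((dvd_add_left (dvd_mul_of_dvd_left (dvd_pow_self P c.succ_ne_zero) _)).1 hd)
  rcases hAB with rfl | hXB
  · refine ⟨P ^ a * (u + P ^ (c + 1) * s), B, u + P ^ (c + 1) * s, a,
      ⟨α * (w + r) - P ^ c * s ^ 2, ?_⟩, by omega, Or.inl rfl, hu' s⟩
    linear_combination hr + hw + P ^ (2 * a + 1 + c) * hs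
  · refine ⟨A, B + P ^ (a + c + 1) * s, u + P ^ (c + 1) * (X * s), a,
      ⟨α * (w + r) - X * P ^ c * s ^ 2, ?_⟩, by omega, Or.inr ?_, hu' (X * s)⟩
    · linear_combination hr + hw + P ^ (2 * a + 1 + c) * hs - 2 * s * P ^ (a + c + 1) * hXB
    · linear_combination hXB

theorem HasSmoothRep.mono (h2 : (2 : F) ≠ 0) (hP : Prime P) (hf : HasSmoothRep P ν f)
    (hνμ : ν ≤ μ) : HasSmoothRep P μ f := by
  induction μ, hνμ using Nat.le_induction with
  | base => exact hf
  | succ μ _ ih => exact ih.lift h2 hP (by simp)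

theorem hasSmoothRep_of_not_pow_dvd (hP : Prime P) {A B : F[X]} {v : ℕ}
    (hrep : P ^ ν ∣ f - (A ^ 2 + X * B ^ 2)) (hf : ¬P ^ (v + 1) ∣ f) (hν : v + 2 ≤ ν) :
    HasSmoothRep P ν f := by
  have hsum : ¬P ^ (v + 1) ∣ A ^ 2 + X * B ^ 2 := fun hd =>
    hf (by simpa using dvd_add ((pow_dvd_pow P (by omega)).trans hrep) hd)
  by_cases hA : P ^ (v + 1) ∣ A ^ 2
  · have hXB : ¬P ^ (v + 1) ∣ X * B ^ 2 := fun hd => hsum (dvd_add hA hd)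
    have hXB0 : X * B ≠ 0 := by rintro h0; exact hXB (by simp [sq, ← mul_assoc, h0])
    obtain ⟨a, u, hu, hfac⟩ := WfDvdMonoid.max_power_factor hXB0 hP.irreducible
    refine ⟨A, B, u, a, hrep, ?_, Or.inr hfac, hu⟩
    -- `(X B)² = X · X B²` and `X` is squarefree, so `P^(2a) ∣ X · X B²` forces `2a ≤ v + 1`.
    by_contra! ha
    refine hXB (hP.pow_dvd_of_pow_succ_dvd_mul_of_squarefree irreducible_X.squarefree _ ?_)
    refine (pow_dvd_pow P (by omega : v + 1 + 1 ≤ 2 * a)).trans ⟨u ^ 2, ?_⟩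
    linear_combination (X * B + P ^ a * u) * hfac
  · have hA0 : A ≠ 0 := by rintro rfl; simp at hA
    obtain ⟨a, u, hu, hfac⟩ := WfDvdMonoid.max_power_factor hA0 hP.irreducible
    refine ⟨A, B, u, a, hrep, ?_, Or.inl hfac, hu⟩
    by_contra! ha
    exact hA ((pow_dvd_pow P (by omega : v + 1 ≤ 2 * a)).trans ⟨u ^ 2, by rw [hfac]; ring⟩)

theorem exists_hasSmoothRep_of_dvd (h2 : (2 : F) ≠ 0) (hP : Prime P) {k V : ℕ}
    {h : Fin k → F[X]} (hV : ∀ i j, i ≠ j → ¬P ^ V ∣ h i - h j)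
    (hf : ∀ i, ∃ A B : F[X], P ^ (2 * V + 4) ∣ f + h i - (A ^ 2 + X * B ^ 2)) :
    ∃ f₀ ν₀, ∀ i, HasSmoothRep P ν₀ (f₀ + h i) := by
  choose A B hAB using hf
  by_cases hdeep : ∃ i₀, P ^ (2 * V + 3) ∣ f + h i₀
  · obtain ⟨i₀, hi₀⟩ := hdeep
    have hshallow (i : Fin k) (hi : i ≠ i₀) : ¬P ^ (V + 1) ∣ f + h i := fun hd =>
      hV i i₀ hi <| (pow_dvd_pow P V.le_succ).trans <| by
        simpa using dvd_sub hd ((pow_dvd_pow P (by omega)).trans hi₀)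
    refine ⟨f + P ^ (2 * V + 2), 2 * V + 3, fun i => ?_⟩
    rcases eq_or_ne i i₀ with rfl | hi
    · exact ⟨P ^ (V + 1), 0, 1, V + 1, by convert hi₀ using 1; ring, by omega,
        Or.inl (mul_one _).symm, hP.not_dvd_one⟩
    · have hrep := (pow_dvd_pow P (by omega : 2 * V + 2 ≤ 2 * V + 4)).trans (hAB i)
      exact (hasSmoothRep_of_not_pow_dvd hP hrep (hshallow i hi) (by omega)).lift h2 hP
        ⟨1, by ring⟩
  · rw [not_exists] at hdeep
    exact ⟨f, 2 * V + 4, fun i => hasSmoothRep_of_not_pow_dvd hP (hAB i) (hdeep i) le_rfl⟩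

end SmoothRep

section Ahset

variable {F : Type*} [Field F] {k : ℕ} {h : Fin k → F[X]}

theorem mk_mem_ahset_iff {g f : F[X]} :
    Ideal.Quotient.mk (Ideal.span {g}) f ∈ Ahset F h g ↔
      ∀ i, ∃ A B : F[X], g ∣ f + h i - (A ^ 2 + X * B ^ 2) := by
  simp only [Ahset, Aset, Set.mem_ofPred_eq, ← map_add, Ideal.Quotient.eq,
    Ideal.mem_span_singleton]

theorem ahset_eq_empty_of_dvd {g g' : F[X]} (hgg' : g ∣ g') (hg : Ahset F h g = ∅) :
    Ahset F h g' = ∅ := by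
  refine Set.eq_empty_of_forall_notMem fun x hx => ?_
  obtain ⟨f, rfl⟩ := Ideal.Quotient.mk_surjective x
  have hf : Ideal.Quotient.mk (Ideal.span {g}) f ∈ Ahset F h g :=
    mk_mem_ahset_iff.2 fun i =>
      let ⟨A, B, hAB⟩ := mk_mem_ahset_iff.1 hx i
      ⟨A, B, hgg'.trans hAB⟩
  simp [hg] at hf

variable [Fintype F]

theorem finite_quotient_span_singleton {g : F[X]} (hg : g ≠ 0) :
    Finite (F[X] ⧸ Ideal.span {g}) :=
  have := (AdjoinRoot.powerBasis hg).finite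
  Module.finite_of_finite F (M := AdjoinRoot g)

theorem absP_pow_sub_le_card_ahset (h2 : (2 : F) ≠ 0) {P f₀ : F[X]} (hP : Prime P) {ν₀ ν : ℕ}
    (hf₀ : ∀ i, HasSmoothRep P ν₀ (f₀ + h i)) (hν : ν₀ < ν) :
    absP F P ^ (ν - ν₀) ≤ Nat.card (Ahset F h (P ^ ν)) := by
  set n := (ν - ν₀) * P.natDegree
  have hmem (r : F[X]) : Ideal.Quotient.mk _ (f₀ + P ^ ν₀ * r) ∈ Ahset F h (P ^ ν) := by
    refine mk_mem_ahset_iff.2 fun i => ?_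
    obtain ⟨A, B, -, -, hAB, -⟩ :=
      ((hf₀ i).lift (g := f₀ + P ^ ν₀ * r + h i) h2 hP ⟨r, by ring⟩).mono h2 hP hν
    exact ⟨A, B, hAB⟩
  have hinj : Function.Injective fun r : degreeLT F n =>
      (⟨_, hmem r⟩ : Ahset F h (P ^ ν)) := by
    intro r r' hrr'
    have hd : P ^ ν₀ * P ^ (ν - ν₀) ∣ P ^ ν₀ * (r - r' : F[X]) := by
      rw [← pow_add, Nat.add_sub_cancel' hν.le]
      convert Ideal.mem_span_singleton.1 (Ideal.Quotient.eq.1 (congrArg Subtype.val hrr'))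
        using 1
      ring
    have hdeg : degree (r - r' : F[X]) < degree (P ^ (ν - ν₀)) := by
      rw [degree_eq_natDegree (pow_ne_zero _ hP.ne_zero), natDegree_pow]
      exact mem_degreeLT.1 (sub_mem r.2 r'.2)
    exact Subtype.ext (sub_eq_zero.1 (eq_zero_of_dvd_of_degree_lt
      ((mul_dvd_mul_iff_left (pow_ne_zero _ hP.ne_zero)).1 hd) hdeg))
  have := finite_quotient_span_singleton (pow_ne_zero ν hP.ne_zero)
  have hcard := Nat.card_le_card_of_injective _ hinj
  rw [Nat.card_congr (degreeLTEquiv F n).toEquiv, Nat.card_fun, Nat.card_fin,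
    Nat.card_eq_fintype_card (α := F)] at hcard
  rw [absP, ← pow_mul, mul_comm]
  exact_mod_cast hcard

end Ahset

theorem delta_eq_zero_iff_local_obstruction_general (F : Type) [Field F] [Fintype F]
    (hF : Odd (Fintype.card F)) (P : F[X]) (hPi : Irreducible P)
    (k : ℕ) (h : Fin k → F[X]) (hinj : Function.Injective h) :
    Filter.Tendsto (fun ν : ℕ => (Nat.card ↥(Ahset F h (P ^ ν)) : ℝ) / absP F P ^ ν)
        Filter.atTop (nhds 0) ↔
      ∃ ν : ℕ, 1 ≤ ν ∧ Ahset F h (P ^ ν) = ∅ := by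
  have h2 : (2 : F) ≠ 0 := Ring.two_ne_zero fun hchar => by
    rw [FiniteField.even_card_iff_char_two, ← Nat.even_iff] at hchar
    exact Nat.not_even_iff_odd.2 hF hchar
  constructor
  · intro htend
    by_contra! hne
    obtain ⟨V, hV⟩ := exists_pow_not_dvd_sub hPi.not_isUnit hinj
    obtain ⟨x, hx⟩ := hne (2 * V + 4) (by omega)
    obtain ⟨f, rfl⟩ := Ideal.Quotient.mk_surjective x
    obtain ⟨f₀, ν₀, hf₀⟩ := exists_hasSmoothRep_of_dvd h2 hPi.prime hV (mk_mem_ahset_iff.1 hx)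
    have habs : 0 < absP F P := pow_pos (Nat.cast_pos.2 Fintype.card_pos) _
    have hlower : ∀ᶠ ν in atTop,
        (absP F P ^ ν₀)⁻¹ ≤ (Nat.card ↥(Ahset F h (P ^ ν)) : ℝ) / absP F P ^ ν := by
      filter_upwards [eventually_gt_atTop ν₀] with ν hν
      rw [le_div_iff₀ (pow_pos habs ν), mul_comm, ← pow_sub₀ _ habs.ne' hν.le]
      exact absP_pow_sub_le_card_ahset h2 hPi.prime hf₀ hν
    exact (inv_pos.2 (pow_pos habs ν₀)).not_ge (ge_of_tendsto htend hlower)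
  · rintro ⟨ν₀, -, hempty⟩
    refine tendsto_const_nhds.congr' ?_
    filter_upwards [eventually_ge_atTop ν₀] with ν hν
    simp [ahset_eq_empty_of_dvd (pow_dvd_pow P hν) hempty]

/-- **Corollary (local obstructions).**
Let `P` be monic irreducible and `h = (h₁,…,h_k)` pairwise distinct. Then
`δ_{q,h}(P) = lim_ν |P|^{−ν}#𝒜_{q,h}(P^ν) = 0` if and only if `𝒜_{q,h}(P^ν) = ∅`
for some `ν ≥ 1`. -/
theorem delta_eq_zero_iff_local_obstruction (F : Type) [Field F] [Fintype F]
    (hF : Odd (Fintype.card F)) (P : F[X]) (hPm : P.Monic) (hPi : Irreducible P)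
    (k : ℕ) (h : Fin k → F[X]) (hinj : Function.Injective h) :
    Filter.Tendsto (fun ν : ℕ => (Nat.card ↥(Ahset F h (P ^ ν)) : ℝ) / absP F P ^ ν)
        Filter.atTop (nhds 0) ↔
      ∃ ν : ℕ, 1 ≤ ν ∧ Ahset F h (P ^ ν) = ∅ :=
  delta_eq_zero_iff_local_obstruction_general F hF P hPi k h hinj
end

section
/- Let (G_i)_{i∈I} be a family of finite groups indexed by a finite set I, let G = ∏_{i∈I} G_i, let H ≤ G a subgroup, and let π_i : G → G_i be the projections. If H·M(G) = G and π_i(H) = G_i for all i ∈ I, then H = G. -/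
noncomputable section

/-- A maximal normal subgroup: a proper normal subgroup maximal among proper normal
subgroups. -/
def IsMaximalNormal {G : Type*} [Group G] (N : Subgroup G) : Prop :=
  N.Normal ∧ N ≠ ⊤ ∧ ∀ N' : Subgroup G, N'.Normal → N < N' → N' = ⊤

/-- The Melnikov subgroup `M(G)`: the intersection of all maximal normal subgroups of
`G` (equal to `G` itself when there are none, i.e. when `G` is trivial). -/
def melnikov (G : Type*) [Group G] : Subgroup G :=
  sInf {N : Subgroup G | IsMaximalNormal N}

end

/-!
Induct on `|G|`. For a nontrivial normal subgroup `K` of a factor `Gᵢ`, the image of `H` in the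
product with `Gᵢ` replaced by `Gᵢ / K` again satisfies both hypotheses (a surjection maps the
Melnikov subgroup into the Melnikov subgroup), so by induction `H · K = G`. If `H ∩ Gᵢ ≠ 1` for
some `i`, then `H ∩ Gᵢ` is normal in `Gᵢ` because `πᵢ(H) = Gᵢ`, and `K = H ∩ Gᵢ` gives `H = G`.
Otherwise `K = M(Gᵢ)` and Dedekind's law give `Gᵢ = (Gᵢ ∩ H) · M(Gᵢ) = M(Gᵢ)`, which forces `Gᵢ`
to be trivial; hence `M(G) = 1` and `H = G`.
-/

open Subgroup Function

theorem card_lt_card_of_surjective_of_ker_ne_bot {G Q : Type*} [Group G] [Group Q] [Finite G]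
    {f : G →* Q} (hf : Surjective f) (hker : f.ker ≠ ⊥) : Nat.card Q < Nat.card G := by
  have : Finite Q := .of_surjective f hf
  rw [card_eq_card_quotient_mul_card_subgroup f.ker,
    Nat.card_congr (QuotientGroup.quotientKerEquivOfSurjective f hf).toEquiv]
  exact lt_mul_of_one_lt_right Nat.card_pos ((one_lt_card_iff_ne_bot _).2 hker)

theorem Subgroup.inf_sup_of_le_of_normal {G : Type*} [Group G] {A B C : Subgroup G} [C.Normal]
    (h : C ≤ A) : A ⊓ (B ⊔ C) = A ⊓ B ⊔ C := by
  apply SetLike.coe_injective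
  rw [coe_inf, mul_normal, mul_normal, inf_mul_assoc A B C h]

section Melnikov

variable {G Q : Type*} [Group G] [Group Q]

theorem melnikov_le {N : Subgroup G} (h : IsMaximalNormal N) : melnikov G ≤ N :=
  sInf_le h

instance melnikov_normal : (melnikov G).Normal :=
  ⟨fun n hn g => mem_sInf.2 fun N hN => hN.1.conj_mem n (mem_sInf.1 hn N hN) g⟩

theorem exists_isMaximalNormal [Finite G] [Nontrivial G] :
    ∃ N : Subgroup G, IsMaximalNormal N := by
  obtain ⟨N, ⟨hN, hN_ne_top⟩, hmax⟩ :=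
    (Set.toFinite {N : Subgroup G | N.Normal ∧ N ≠ ⊤}).exists_maximal
      ⟨⊥, inferInstance, bot_ne_top⟩
  exact ⟨N, hN, hN_ne_top, fun N' hN' hlt =>
    by_contra fun hN'_ne_top => hlt.not_ge (hmax ⟨hN', hN'_ne_top⟩ hlt.le)⟩

theorem melnikov_ne_top [Finite G] [Nontrivial G] : melnikov G ≠ ⊤ := by
  obtain ⟨N, hN⟩ := exists_isMaximalNormal (G := G)
  exact fun h => hN.2.1 (top_le_iff.1 (h ▸ melnikov_le hN))

theorem IsMaximalNormal.comap {f : G →* Q} (hf : Surjective f) {N : Subgroup Q}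
    (hN : IsMaximalNormal N) : IsMaximalNormal (N.comap f) := by
  obtain ⟨hN, hN_ne_top, hmax⟩ := hN
  refine ⟨hN.comap f, fun h => hN_ne_top ?_, fun N' hN' hlt => ?_⟩
  · rw [← map_comap_eq_self_of_surjective hf N, h, map_top_of_surjective f hf]
  have hker : f.ker ≤ N' := (ker_le_comap f N).trans hlt.le
  have hlt_map : N < N'.map f := by
    refine lt_of_le_of_ne ?_ fun h => hlt.ne ?_
    · rw [← map_comap_eq_self_of_surjective hf N]
      exact map_mono hlt.le
    · rw [h, comap_map_eq_self hker]
  rw [← comap_map_eq_self hker, hmax _ (hN'.map f hf) hlt_map, comap_top]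

theorem melnikov_le_comap {f : G →* Q} (hf : Surjective f) :
    melnikov G ≤ (melnikov Q).comap f := fun _ hx =>
  mem_sInf.2 fun _ hN => melnikov_le (hN.comap hf) hx

theorem map_sup_melnikov_eq_top {f : G →* Q} (hf : Surjective f) {H : Subgroup G}
    (h : H ⊔ melnikov G = ⊤) : H.map f ⊔ melnikov Q = ⊤ := by
  rw [eq_top_iff, ← map_top_of_surjective f hf, ← h, Subgroup.map_sup]
  exact sup_le_sup_left (map_le_iff_le_comap.2 (melnikov_le_comap hf)) _

end Melnikov

section Pi

variable {I : Type*} {G Q : I → Type*} [∀ i, Group (G i)] [∀ i, Group (Q i)]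

theorem melnikov_pi_eq_bot (h : ∀ i, melnikov (G i) = ⊥) : melnikov (∀ i, G i) = ⊥ := by
  refine eq_bot_iff.2 fun x hx => (mem_bot).2 (funext fun i => ?_)
  have hxi := melnikov_le_comap (f := Pi.evalMonoidHom G i) (surjective_eval i) hx
  rwa [mem_comap, h i, mem_bot] at hxi

theorem MonoidHom.ker_piMap (f : ∀ i, G i →* Q i) :
    (MonoidHom.piMap f).ker = Subgroup.pi Set.univ fun i => (f i).ker := by
  ext x
  simp [mem_pi, funext_iff]

theorem map_evalMonoidHom_map_piMap {f : ∀ i, G i →* Q i} (hf : ∀ i, Surjective (f i))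
    {H : Subgroup (∀ i, G i)} (h : ∀ i, H.map (Pi.evalMonoidHom G i) = ⊤) (i : I) :
    (H.map (MonoidHom.piMap f)).map (Pi.evalMonoidHom Q i) = ⊤ := by
  rw [map_map, show (Pi.evalMonoidHom Q i).comp (MonoidHom.piMap f) =
    (f i).comp (Pi.evalMonoidHom G i) from rfl, ← map_map, h i, map_top_of_surjective _ (hf i)]

variable [DecidableEq I]

theorem mul_mulSingle_mul_inv (g : ∀ i, G i) (i : I) (x : G i) :
    g * Pi.mulSingle i x * g⁻¹ = Pi.mulSingle i (g i * x * (g i)⁻¹) := by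
  funext j
  rcases eq_or_ne j i with rfl | hj <;> simp [*]

instance normal_map_mulSingle {i : I} (K : Subgroup (G i)) [hK : K.Normal] :
    (K.map (MonoidHom.mulSingle G i)).Normal :=
  ⟨by
    rintro _ ⟨k, hk, rfl⟩ g
    exact ⟨_, hK.conj_mem k hk (g i), (mul_mulSingle_mul_inv g i k).symm⟩⟩

theorem normal_comap_mulSingle {H : Subgroup (∀ i, G i)} {i : I}
    (h : H.map (Pi.evalMonoidHom G i) = ⊤) : (H.comap (MonoidHom.mulSingle G i)).Normal :=
  ⟨fun x hx g => by
    obtain ⟨g', hg', rfl⟩ := mem_map.1 (h ▸ mem_top g)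
    simpa [mem_comap, mul_mulSingle_mul_inv] using H.mul_mem (H.mul_mem hg' hx) (H.inv_mem hg')⟩

instance normal_update_bot {i : I} (K : Subgroup (G i)) [K.Normal] (j : I) :
    (update (fun j => (⊥ : Subgroup (G j))) i K j).Normal := by
  rcases eq_or_ne j i with rfl | hj
  · rwa [update_self]
  · rw [update_of_ne hj]
    infer_instance

theorem pi_update_bot_eq_map {i : I} (K : Subgroup (G i)) :
    pi Set.univ (update (fun j => (⊥ : Subgroup (G j))) i K) =
      K.map (MonoidHom.mulSingle G i) := by
  ext x
  refine ⟨fun hx => ⟨x i, by simpa using hx i trivial, funext fun j => ?_⟩, ?_⟩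
  · rcases eq_or_ne j i with rfl | hj
    · simp
    · simpa [hj, eq_comm] using hx j trivial
  · rintro ⟨k, hk, rfl⟩
    simpa using hk

theorem eq_top_of_sup_map_mulSingle_eq_top {H : Subgroup (∀ i, G i)} {i : I}
    {K : Subgroup (G i)} [K.Normal] (hH : H.comap (MonoidHom.mulSingle G i) = ⊥)
    (hK : H ⊔ K.map (MonoidHom.mulSingle G i) = ⊤) : K = ⊤ := by
  set f := MonoidHom.mulSingle G i
  have hrange : f.range = K.map f := by
    calc f.range = f.range ⊓ (H ⊔ K.map f) := by rw [hK, inf_top_eq]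
      _ = f.range ⊓ H ⊔ K.map f := Subgroup.inf_sup_of_le_of_normal (map_le_range f K)
      _ = K.map f := by rw [← map_comap_eq, hH, Subgroup.map_bot, bot_sup_eq]
  rwa [MonoidHom.range_eq_map, eq_comm, (map_injective (Pi.mulSingle_injective i)).eq_iff]
    at hrange

theorem eq_top_of_forall_sup_map_mulSingle_eq_top [∀ i, Finite (G i)]
    {H : Subgroup (∀ i, G i)} (h1 : H ⊔ melnikov (∀ i, G i) = ⊤)
    (h2 : ∀ i, H.map (Pi.evalMonoidHom G i) = ⊤)
    (hsup : ∀ i (K : Subgroup (G i)), K.Normal → K ≠ ⊥ →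
      H ⊔ K.map (MonoidHom.mulSingle G i) = ⊤) :
    H = ⊤ := by
  by_cases hH : ∃ i, H.comap (MonoidHom.mulSingle G i) ≠ ⊥
  · obtain ⟨i, hi⟩ := hH
    rw [← sup_eq_left.2 (map_comap_le (MonoidHom.mulSingle G i) H)]
    exact hsup i _ (normal_comap_mulSingle (h2 i)) hi
  push Not at hH
  have hM : ∀ i, melnikov (G i) = ⊥ := fun i => by
    by_contra hi
    have : Nontrivial (G i) := by
      contrapose! hi
      exact Subsingleton.elim _ _
    exact melnikov_ne_top (eq_top_of_sup_map_mulSingle_eq_top (hH i) (hsup i _ inferInstance hi))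
  rwa [melnikov_pi_eq_bot hM, sup_bot_eq] at h1

end Pi

/-- **Proposition (filling a direct product).**
Let `(G_i)_{i∈I}` be a finite family of finite groups, `G = ∏ᵢ G_i`, and `H ≤ G`.
If `H·M(G) = G` and `πᵢ(H) = G_i` for all `i`, then `H = G`. -/
theorem eq_top_of_sup_melnikov_and_surj_proj {I : Type*} [Finite I] (G : I → Type*)
    [∀ i, Group (G i)] [∀ i, Finite (G i)] (H : Subgroup (∀ i, G i))
    (h1 : H ⊔ melnikov (∀ i, G i) = ⊤)
    (h2 : ∀ i, H.map (Pi.evalMonoidHom G i) = ⊤) :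
    H = ⊤ := by
  classical
  induction hn : Nat.card (∀ i, G i) using Nat.strong_induction_on generalizing G H with
  | _ n ih =>
  refine eq_top_of_forall_sup_map_mulSingle_eq_top h1 h2 fun i K _ hK => ?_
  let N := update (fun j => (⊥ : Subgroup (G j))) i K
  let φ := MonoidHom.piMap fun j => QuotientGroup.mk' (N j)
  have hmk : ∀ j, Surjective (QuotientGroup.mk' (N j)) := fun j => QuotientGroup.mk'_surjective _
  have hφ : Surjective φ := Surjective.piMap hmk
  have hker : φ.ker = K.map (MonoidHom.mulSingle G i) := by
    simp only [φ, MonoidHom.ker_piMap, QuotientGroup.ker_mk', N, pi_update_bot_eq_map]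
  have hker_ne_bot : φ.ker ≠ ⊥ :=
    hker ▸ (map_eq_bot_iff_of_injective _ (Pi.mulSingle_injective i)).not.2 hK
  have hφH : H.map φ = ⊤ :=
    ih _ (hn ▸ card_lt_card_of_surjective_of_ker_ne_bot hφ hker_ne_bot) (fun j => G j ⧸ N j)
      (H.map φ) (map_sup_melnikov_eq_top hφ h1) (map_evalMonoidHom_map_piMap hmk h2) rfl
  rw [← hker, ← comap_map_eq, hφH, comap_top]
end
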